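/- (Main theorem: discrete multi-dimensional Carr–Nadtochiy transform.) For every (t,x) ∈ ℕ × ∂B with t ≥ 1 and every function f : ℤ^d → ℝ vanishing outside B, one has E[f(Z^x_t)] = E[N f(Z^x_t)]. -/

import Mathlib

open Finset

/-- The `i`-th standard unit vector `e_i` in `ℤ^(d+1)`. -/
def unitVec (d : ℕ) (i : Fin (d + 1)) : Fin (d + 1) → ℤ := Pi.single i 1

/-- The ℓ¹-norm `‖v‖₁ = ∑ i, |v i|` on `ℤ^(d+1)`. -/
def norm1 {d : ℕ} (v : Fin (d + 1) → ℤ) : ℤ := ∑ i, |v i|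

/-- `P t x z` represents the `t`-step transition probability `P(Z^x_t = z)` of a
time-homogeneous Markov chain on `ℤ^(d+1)` which at each step moves by `± e_i`,
with all `2(d+1)` one-step probabilities strictly positive and summing to `1`. -/
structure IsRandomWalk (d : ℕ)
    (P : ℕ → (Fin (d + 1) → ℤ) → (Fin (d + 1) → ℤ) → ℝ) : Prop where
  nonneg : ∀ t x z, 0 ≤ P t x z
  init : ∀ x z, P 0 x z = if z = x then 1 else 0
  step : ∀ t x z, P (t + 1) x z =
      ∑ i, P 1 x (x + unitVec d i) * P t (x + unitVec d i) z
        + ∑ i, P 1 x (x - unitVec d i) * P t (x - unitVec d i) z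
  sum_one : ∀ x, (∑ i, P 1 x (x + unitVec d i)) + (∑ i, P 1 x (x - unitVec d i)) = 1
  pos_add : ∀ x i, 0 < P 1 x (x + unitVec d i)
  pos_sub : ∀ x i, 0 < P 1 x (x - unitVec d i)

/-- The expectation `E[h(Z^x_t)]` (the law of `Z^x_t` has finite support). -/
noncomputable def expect {d : ℕ} (P : ℕ → (Fin (d + 1) → ℤ) → (Fin (d + 1) → ℤ) → ℝ)
    (t : ℕ) (x : Fin (d + 1) → ℤ) (h : (Fin (d + 1) → ℤ) → ℝ) : ℝ :=
  ∑ᶠ z, h z * P t x z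

/-- The finite set `S(t,x) = {(s,y) ∈ ℕ × ∂B : 1 ≤ s ≤ t, ‖y − x‖₁ ≤ t − s,
and t − s − ‖y − x‖₁ is even}`. -/
noncomputable def Sset (d t : ℕ) (x : Fin (d + 1) → ℤ) : Finset (ℕ × (Fin (d + 1) → ℤ)) :=
  ((Finset.Icc 1 t) ×ˢ (Fintype.piFinset fun i => Finset.Icc (x i - t) (x i + t))).filter
    (fun p => p.2 (Fin.last d) = 0 ∧ norm1 (p.2 - x) ≤ (t : ℤ) - p.1 ∧
      Even ((t : ℤ) - p.1 - norm1 (p.2 - x)))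

/-- The matrix `W^+_{t,x}`, with entries `(W^+)_{(s,y),(u,z)} = P(Z^y_s = z + u e_d)`. -/
noncomputable def Wplus {d : ℕ} (P : ℕ → (Fin (d + 1) → ℤ) → (Fin (d + 1) → ℤ) → ℝ)
    (t : ℕ) (x : Fin (d + 1) → ℤ) :
    Matrix {p // p ∈ Sset d t x} {p // p ∈ Sset d t x} ℝ :=
  fun p q => P p.1.1 p.1.2 (q.1.2 + Pi.single (Fin.last d) (q.1.1 : ℤ))

/-- The matrix `W^-_{t,x}`, with entries `(W^-)_{(s,y),(u,z)} = P(Z^y_s = z - u e_d)`. -/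
noncomputable def Wminus {d : ℕ} (P : ℕ → (Fin (d + 1) → ℤ) → (Fin (d + 1) → ℤ) → ℝ)
    (t : ℕ) (x : Fin (d + 1) → ℤ) :
    Matrix {p // p ∈ Sset d t x} {p // p ∈ Sset d t x} ℝ :=
  fun p q => P p.1.1 p.1.2 (q.1.2 - Pi.single (Fin.last d) (q.1.1 : ℤ))

/-- `N_{t,x} = (W^-_{t,x})⁻¹ W^+_{t,x}`. -/
noncomputable def Nmat {d : ℕ} (P : ℕ → (Fin (d + 1) → ℤ) → (Fin (d + 1) → ℤ) → ℝ)
    (t : ℕ) (x : Fin (d + 1) → ℤ) :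
    Matrix {p // p ∈ Sset d t x} {p // p ∈ Sset d t x} ℝ :=
  (Wminus P t x)⁻¹ * Wplus P t x

/-- The extended transform `N f`, vanishing outside `{w : w_d < 0}`, defined at a point
`w = x − t e_d` (with `x ∈ ∂B`, `t ≥ 1`) as the `(t,x)`-component of `N_{t,x}` applied to
the vector `(f(z + u e_d))_{(u,z) ∈ S(t,x)}`.  (Note that `(t,x) ∈ S(t,x)` always holds
in this situation, so the guard below is satisfied exactly when `w_d < 0`.) -/
noncomputable def Ntrans {d : ℕ} (P : ℕ → (Fin (d + 1) → ℤ) → (Fin (d + 1) → ℤ) → ℝ)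
    (f : (Fin (d + 1) → ℤ) → ℝ) : (Fin (d + 1) → ℤ) → ℝ := fun w =>
  if hm : ((-(w (Fin.last d))).toNat, Function.update w (Fin.last d) 0) ∈
      Sset d (-(w (Fin.last d))).toNat (Function.update w (Fin.last d) 0) then
    (Nmat P (-(w (Fin.last d))).toNat (Function.update w (Fin.last d) 0)).mulVec
      (fun p => f (p.1.2 + Pi.single (Fin.last d) (p.1.1 : ℤ)))
      ⟨((-(w (Fin.last d))).toNat, Function.update w (Fin.last d) 0), hm⟩
  else 0


/-! ### Auxiliary lemmas -/

section Aux

lemma norm1_nonneg {d : ℕ} (v : Fin (d + 1) → ℤ) : 0 ≤ norm1 v :=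
  Finset.sum_nonneg fun i _ => abs_nonneg _

lemma abs_le_norm1 {d : ℕ} (v : Fin (d + 1) → ℤ) (i : Fin (d + 1)) : |v i| ≤ norm1 v :=
  Finset.single_le_sum (fun j _ => abs_nonneg (v j)) (Finset.mem_univ i)

lemma norm1_zero {d : ℕ} : norm1 (0 : Fin (d + 1) → ℤ) = 0 := by
  simp [norm1]

lemma norm1_eq_zero {d : ℕ} {v : Fin (d + 1) → ℤ} (h : norm1 v ≤ 0) : v = 0 := by
  funext i
  have h1 := abs_le_norm1 v i
  have : |v i| ≤ 0 := le_trans h1 h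
  simpa [abs_nonpos_iff] using this

lemma even_norm1_sub_sum {d : ℕ} (v : Fin (d + 1) → ℤ) : Even (norm1 v - ∑ i, v i) := by
  rw [norm1, ← Finset.sum_sub_distrib]
  apply Finset.even_sum
  intro i _
  rcases abs_choice (v i) with h | h <;> rw [h]
  · simp
  · have : -v i - v i = -(2 * v i) := by ring
    rw [this]; exact (even_two_mul (v i)).neg

lemma even_norm1_add {d : ℕ} (v w : Fin (d + 1) → ℤ) :
    Even (norm1 (v + w) - norm1 v - norm1 w) := by
  have h1 := even_norm1_sub_sum (v + w)
  have h2 := even_norm1_sub_sum v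
  have h3 := even_norm1_sub_sum w
  have he : norm1 (v + w) - norm1 v - norm1 w =
      (norm1 (v + w) - ∑ i, (v + w) i) - (norm1 v - ∑ i, v i) - (norm1 w - ∑ i, w i) := by
    simp [Pi.add_apply, Finset.sum_add_distrib]; ring
  rw [he]
  exact (h1.sub h2).sub h3

lemma norm1_single {d : ℕ} (i : Fin (d + 1)) (c : ℤ) :
    norm1 (Pi.single i c) = |c| := by
  rw [norm1]
  rw [Finset.sum_eq_single i]
  · simp
  · intro j _ hj; simp [Pi.single_apply, hj]
  · intro h; simp at h

lemma norm1_add_le {d : ℕ} (v w : Fin (d + 1) → ℤ) :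
    norm1 (v + w) ≤ norm1 v + norm1 w := by
  rw [norm1, norm1, norm1, ← Finset.sum_add_distrib]
  exact Finset.sum_le_sum fun i _ => abs_add_le _ _

lemma norm1_step {d : ℕ} (v : Fin (d + 1) → ℤ) (i : Fin (d + 1)) (c : ℤ) (hc : |c| = 1) :
    norm1 (v + Pi.single i c) ≤ norm1 v + 1 ∧
      Even (norm1 (v + Pi.single i c) - norm1 v - 1) := by
  constructor
  · have h := norm1_add_le v (Pi.single i c)
    rw [norm1_single, hc] at h
    exact h
  · have h := even_norm1_add v (Pi.single i c)
    rw [norm1_single, hc] at h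
    exact h

lemma norm1_add_single_last {d : ℕ} {v : Fin (d + 1) → ℤ} (hv : v (Fin.last d) = 0)
    (c : ℤ) : norm1 (v + Pi.single (Fin.last d) c) = norm1 v + |c| := by
  have key : ∀ i : Fin (d + 1),
      |(v + (Pi.single (Fin.last d) c : Fin (d + 1) → ℤ)) i| =
        |v i| + |(Pi.single (Fin.last d) c : Fin (d + 1) → ℤ) i| := by
    intro i
    by_cases hi : i = Fin.last d
    · subst hi; simp [hv]
    · simp [Pi.single_eq_of_ne hi]
  rw [norm1, Finset.sum_congr rfl (fun i _ => key i), Finset.sum_add_distrib,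
    ← norm1, ← norm1, norm1_single]

lemma norm1_sub_single_last {d : ℕ} {v : Fin (d + 1) → ℤ} (hv : v (Fin.last d) = 0)
    (c : ℤ) : norm1 (v - Pi.single (Fin.last d) c) = norm1 v + |c| := by
  rw [sub_eq_add_neg, ← Pi.single_neg, norm1_add_single_last hv, abs_neg]

lemma mem_Sset_iff {d t : ℕ} {x : Fin (d + 1) → ℤ} {p : ℕ × (Fin (d + 1) → ℤ)} :
    p ∈ Sset d t x ↔ 1 ≤ p.1 ∧ p.1 ≤ t ∧ p.2 (Fin.last d) = 0 ∧
      norm1 (p.2 - x) ≤ (t : ℤ) - p.1 ∧ Even ((t : ℤ) - p.1 - norm1 (p.2 - x)) := by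
  rw [Sset, Finset.mem_filter, Finset.mem_product, Finset.mem_Icc, Fintype.mem_piFinset]
  constructor
  · rintro ⟨⟨⟨h1, h2⟩, _⟩, h4, h5, h6⟩
    exact ⟨h1, h2, h4, h5, h6⟩
  · rintro ⟨h1, h2, h4, h5, h6⟩
    refine ⟨⟨⟨h1, h2⟩, fun i => ?_⟩, h4, h5, h6⟩
    rw [Finset.mem_Icc]
    have hb : |p.2 i - x i| ≤ (t : ℤ) := by
      have h7 := abs_le_norm1 (p.2 - x) i
      simp only [Pi.sub_apply] at h7
      have hs : (0:ℤ) ≤ p.1 := Int.natCast_nonneg _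
      linarith
    rw [abs_le] at hb
    constructor <;> linarith [hb.1, hb.2]

lemma self_mem_Sset {d t : ℕ} {x : Fin (d + 1) → ℤ} (ht : 1 ≤ t)
    (hx : x (Fin.last d) = 0) : (t, x) ∈ Sset d t x := by
  rw [mem_Sset_iff]
  refine ⟨ht, le_refl t, hx, ?_, ?_⟩ <;> simp [sub_self, norm1_zero]

lemma Sset_subset {d t s : ℕ} {x y : Fin (d + 1) → ℤ}
    (h : (s, y) ∈ Sset d t x) : Sset d s y ⊆ Sset d t x := by
  rw [mem_Sset_iff] at h
  obtain ⟨hs1, hst, hy, hsd, hsp⟩ := h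
  intro q hq
  rw [mem_Sset_iff] at hq ⊢
  obtain ⟨hq1, hqs, hqz, hqd, hqp⟩ := hq
  have he : (q.2 - y) + (y - x) = q.2 - x := by abel
  have htri : norm1 (q.2 - x) ≤ norm1 (q.2 - y) + norm1 (y - x) := by
    have h8 := norm1_add_le (q.2 - y) (y - x)
    rwa [he] at h8
  have hpar : Even (norm1 (q.2 - x) - norm1 (q.2 - y) - norm1 (y - x)) := by
    have h8 := even_norm1_add (q.2 - y) (y - x)
    rwa [he] at h8
  refine ⟨hq1, le_trans hqs hst, hqz, by push_cast; linarith, ?_⟩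
  have he2 : (t : ℤ) - q.1 - norm1 (q.2 - x) =
      ((t : ℤ) - s - norm1 (y - x)) + ((s : ℤ) - q.1 - norm1 (q.2 - y))
        - (norm1 (q.2 - x) - norm1 (q.2 - y) - norm1 (y - x)) := by ring
  rw [he2]
  exact (hsp.add hqp).sub hpar

end Aux

section RW

variable {d : ℕ} {P : ℕ → (Fin (d + 1) → ℤ) → (Fin (d + 1) → ℤ) → ℝ}

lemma P_support (hP : IsRandomWalk d P) : ∀ (s : ℕ) (y z : Fin (d + 1) → ℤ), P s y z ≠ 0 →
    norm1 (z - y) ≤ (s : ℤ) ∧ Even ((s : ℤ) - norm1 (z - y)) := by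
  intro s
  induction s with
  | zero =>
    intro y z h
    rw [hP.init] at h
    by_cases hz : z = y
    · subst hz; simp [norm1_zero]
    · simp [hz] at h
  | succ s ih =>
    intro y z h
    rw [hP.step] at h
    have key : ∃ (y' : Fin (d + 1) → ℤ) (i : Fin (d + 1)) (c : ℤ),
        |c| = 1 ∧ y' = y + Pi.single i c ∧ P s y' z ≠ 0 := by
      rcases (by
        by_contra hc
        push_neg at hc
        rw [hc.1, hc.2, add_zero] at h
        exact h rfl :
        (∑ i, P 1 y (y + unitVec d i) * P s (y + unitVec d i) z) ≠ 0 ∨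
        (∑ i, P 1 y (y - unitVec d i) * P s (y - unitVec d i) z) ≠ 0) with h1 | h1
      · obtain ⟨i, _, hi⟩ := Finset.exists_ne_zero_of_sum_ne_zero h1
        exact ⟨y + unitVec d i, i, 1, by simp, by simp [unitVec], right_ne_zero_of_mul hi⟩
      · obtain ⟨i, _, hi⟩ := Finset.exists_ne_zero_of_sum_ne_zero h1
        refine ⟨y - unitVec d i, i, -1, by simp, ?_, right_ne_zero_of_mul hi⟩
        simp [unitVec, sub_eq_add_neg, ← Pi.single_neg]
    obtain ⟨y', i, c, hc, hy', hne⟩ := key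
    obtain ⟨h1, h2⟩ := ih y' z hne
    have hdecomp : z - y = (z - y') + Pi.single i c := by
      rw [hy']; abel
    have hstep := norm1_step (z - y') i c hc
    rw [← hdecomp] at hstep
    obtain ⟨hle, hpar⟩ := hstep
    constructor
    · push_cast; linarith
    · have he : ((s : ℤ) + 1) - norm1 (z - y) =
          ((s : ℤ) - norm1 (z - y')) - (norm1 (z - y) - norm1 (z - y') - 1) := by ring
      push_cast
      rw [he]
      exact h2.sub hpar

lemma P_down_pos (hP : IsRandomWalk d P) : ∀ (s : ℕ) (y : Fin (d + 1) → ℤ),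
    0 < P s y (y - Pi.single (Fin.last d) (s : ℤ)) := by
  intro s
  induction s with
  | zero =>
    intro y
    simp [hP.init]
  | succ s ih =>
    intro y
    rw [hP.step]
    have hterm : 0 < P 1 y (y - unitVec d (Fin.last d)) *
        P s (y - unitVec d (Fin.last d)) (y - Pi.single (Fin.last d) ((s : ℤ) + 1)) := by
      have he : y - Pi.single (Fin.last d) ((s : ℤ) + 1) =
          (y - unitVec d (Fin.last d)) - Pi.single (Fin.last d) (s : ℤ) := by
        rw [unitVec]
        rw [show ((s : ℤ) + 1) = 1 + (s : ℤ) by ring, Pi.single_add]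
        abel
      rw [he]
      exact mul_pos (hP.pos_sub y (Fin.last d)) (ih _)
    have h1 : (0:ℝ) ≤ ∑ i, P 1 y (y + unitVec d i) * P s (y + unitVec d i)
        (y - Pi.single (Fin.last d) ((s + 1 : ℕ) : ℤ)) :=
      Finset.sum_nonneg fun i _ => mul_nonneg (hP.nonneg _ _ _) (hP.nonneg _ _ _)
    have h2 : P 1 y (y - unitVec d (Fin.last d)) *
        P s (y - unitVec d (Fin.last d)) (y - Pi.single (Fin.last d) ((s + 1 : ℕ) : ℤ)) ≤
        ∑ i, P 1 y (y - unitVec d i) * P s (y - unitVec d i)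
          (y - Pi.single (Fin.last d) ((s + 1 : ℕ) : ℤ)) :=
      Finset.single_le_sum (f := fun i => P 1 y (y - unitVec d i) * P s (y - unitVec d i)
          (y - Pi.single (Fin.last d) ((s + 1 : ℕ) : ℤ)))
        (fun i _ => mul_nonneg (hP.nonneg _ _ _) (hP.nonneg _ _ _)) (Finset.mem_univ (Fin.last d))
    have hterm' : 0 < P 1 y (y - unitVec d (Fin.last d)) *
        P s (y - unitVec d (Fin.last d)) (y - Pi.single (Fin.last d) ((s + 1 : ℕ) : ℤ)) := by
      have he : ((s + 1 : ℕ) : ℤ) = (s : ℤ) + 1 := by push_cast; ring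
      rw [he]
      exact hterm
    linarith

lemma entry_mem_Sset (hP : IsRandomWalk d P) {s u : ℕ} {y z : Fin (d + 1) → ℤ}
    (hy : y (Fin.last d) = 0) (hz : z (Fin.last d) = 0) (hu : 1 ≤ u) {c : ℤ}
    (hc : |c| = (u : ℤ)) (h : P s y (z + Pi.single (Fin.last d) c) ≠ 0) :
    (u, z) ∈ Sset d s y := by
  obtain ⟨h1, h2⟩ := P_support hP s y _ h
  have hzy : (z + (Pi.single (Fin.last d) c : Fin (d + 1) → ℤ)) - y =
      (z - y) + Pi.single (Fin.last d) c := by abel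
  rw [hzy] at h1 h2
  have hlast : (z - y) (Fin.last d) = 0 := by simp [hz, hy]
  rw [norm1_add_single_last hlast, hc] at h1 h2
  rw [mem_Sset_iff]
  refine ⟨hu, ?_, hz, by linarith, ?_⟩
  · have hn := norm1_nonneg (z - y)
    have : (u : ℤ) ≤ (s : ℤ) := by linarith
    exact_mod_cast this
  · have he : (s : ℤ) - (u : ℤ) - norm1 (z - y) = (s : ℤ) - (norm1 (z - y) + u) := by ring
    rw [he]
    exact h2

lemma Wminus_entry_mem (hP : IsRandomWalk d P) {t : ℕ} {x : Fin (d + 1) → ℤ}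
    (p q : {r // r ∈ Sset d t x}) (h : Wminus P t x p q ≠ 0) :
    (q.1.1, q.1.2) ∈ Sset d p.1.1 p.1.2 := by
  have hp := mem_Sset_iff.1 p.2
  have hq := mem_Sset_iff.1 q.2
  apply entry_mem_Sset hP hp.2.2.1 hq.2.2.1 hq.1 (c := -(q.1.1 : ℤ)) (by simp)
  have he : q.1.2 + (Pi.single (Fin.last d) (-(q.1.1 : ℤ)) : Fin (d + 1) → ℤ) =
      q.1.2 - Pi.single (Fin.last d) (q.1.1 : ℤ) := by
    rw [Pi.single_neg, sub_eq_add_neg]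
  rw [he]
  exact h

lemma Wplus_entry_mem (hP : IsRandomWalk d P) {t : ℕ} {x : Fin (d + 1) → ℤ}
    (p q : {r // r ∈ Sset d t x}) (h : Wplus P t x p q ≠ 0) :
    (q.1.1, q.1.2) ∈ Sset d p.1.1 p.1.2 := by
  have hp := mem_Sset_iff.1 p.2
  have hq := mem_Sset_iff.1 q.2
  exact entry_mem_Sset hP hp.2.2.1 hq.2.2.1 hq.1 (c := (q.1.1 : ℤ)) (by simp) h

lemma Wminus_diag_pos (hP : IsRandomWalk d P) {t : ℕ} {x : Fin (d + 1) → ℤ}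
    (p : {r // r ∈ Sset d t x}) : 0 < Wminus P t x p p :=
  P_down_pos hP p.1.1 p.1.2

lemma Wminus_det_isUnit (hP : IsRandomWalk d P) (t : ℕ) (x : Fin (d + 1) → ℤ) :
    IsUnit (Wminus P t x).det := by
  classical
  have hbt : (Wminus P t x).BlockTriangular
      (fun p : {r // r ∈ Sset d t x} => OrderDual.toDual p.1.1) := by
    intro p q hlt
    by_contra h
    have hm := Wminus_entry_mem hP p q h
    have hle : q.1.1 ≤ p.1.1 := (mem_Sset_iff.1 hm).2.1
    exact absurd hle (not_le.2 hlt)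
  rw [hbt.det]
  rw [isUnit_iff_ne_zero, Finset.prod_ne_zero_iff]
  intro a _
  have hdiag : (Wminus P t x).toSquareBlock
      (fun p : {r // r ∈ Sset d t x} => OrderDual.toDual p.1.1) a =
      Matrix.diagonal (fun i => Wminus P t x i.1 i.1) := by
    funext i j
    by_cases hij : i = j
    · subst hij
      rw [Matrix.diagonal_apply_eq]
      rfl
    · rw [Matrix.diagonal_apply_ne _ hij]
      by_contra h
      have h' : Wminus P t x i.1 j.1 ≠ 0 := h
      have hm := Wminus_entry_mem hP i.1 j.1 h'
      have hs : j.1.1.1 = i.1.1.1 := by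
        have hi2 := i.2
        have hj2 := j.2
        have : OrderDual.toDual j.1.1.1 = OrderDual.toDual i.1.1.1 := by rw [hi2, hj2]
        exact OrderDual.toDual_inj.1 this
      have hd := (mem_Sset_iff.1 hm).2.2.2.1
      rw [hs] at hd
      simp only [sub_self] at hd
      have hz : j.1.1.2 - i.1.1.2 = 0 := norm1_eq_zero hd
      have hzz : j.1.1.2 = i.1.1.2 := by
        have := sub_eq_zero.1 hz
        exact this
      apply hij
      apply Subtype.ext
      apply Subtype.ext
      exact (Prod.ext hs hzz).symm
  rw [hdiag, Matrix.det_diagonal]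
  rw [Finset.prod_ne_zero_iff]
  intro i _
  exact ne_of_gt (Wminus_diag_pos hP i.1)

lemma mulVec_apply {n : Type*} [Fintype n] (M : Matrix n n ℝ) (v : n → ℝ) (i : n) :
    M.mulVec v i = ∑ j, M i j * v j := rfl

lemma Nmat_solves (hP : IsRandomWalk d P) (t : ℕ) (x : Fin (d + 1) → ℤ)
    (g : {r // r ∈ Sset d t x} → ℝ) :
    (Wminus P t x).mulVec ((Nmat P t x).mulVec g) = (Wplus P t x).mulVec g := by
  rw [Matrix.mulVec_mulVec, Nmat, ← Matrix.mul_assoc,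
    Matrix.mul_nonsing_inv _ (Wminus_det_isUnit hP t x), Matrix.one_mul]

lemma mulVec_cancel (hP : IsRandomWalk d P) {t : ℕ} {x : Fin (d + 1) → ℤ}
    {hvec gv : {r // r ∈ Sset d t x} → ℝ}
    (he : (Wminus P t x).mulVec hvec = (Wplus P t x).mulVec gv) :
    hvec = (Nmat P t x).mulVec gv := by
  have hu := Wminus_det_isUnit hP t x
  have h1 : (Wminus P t x)⁻¹.mulVec ((Wminus P t x).mulVec hvec)
      = (Wminus P t x)⁻¹.mulVec ((Wplus P t x).mulVec gv) := by rw [he]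
  rw [Matrix.mulVec_mulVec, Matrix.mulVec_mulVec, Matrix.nonsing_inv_mul _ hu,
    Matrix.one_mulVec] at h1
  rw [h1]
  simp only [Nmat]

end RW

/-- The auxiliary global solution vector `H`. -/
noncomputable def Hfun {d : ℕ} (P : ℕ → (Fin (d + 1) → ℤ) → (Fin (d + 1) → ℤ) → ℝ)
    (f : (Fin (d + 1) → ℤ) → ℝ) (t : ℕ) (x : Fin (d + 1) → ℤ) :
    ℕ × (Fin (d + 1) → ℤ) → ℝ := fun q =>
  if hq : q ∈ Sset d t x then
    (Nmat P t x).mulVec (fun p => f (p.1.2 + Pi.single (Fin.last d) (p.1.1 : ℤ))) ⟨q, hq⟩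
  else 0

section RW2

variable {d : ℕ} {P : ℕ → (Fin (d + 1) → ℤ) → (Fin (d + 1) → ℤ) → ℝ}

lemma Hfun_apply (f : (Fin (d + 1) → ℤ) → ℝ) {t : ℕ} {x : Fin (d + 1) → ℤ}
    (q : {p // p ∈ Sset d t x}) :
    Hfun P f t x q.1 = (Nmat P t x).mulVec
      (fun p => f (p.1.2 + Pi.single (Fin.last d) (p.1.1 : ℤ))) q := by
  show dite _ _ _ = _
  rw [dif_pos q.2]

lemma sum_minus_eq (f : (Fin (d + 1) → ℤ) → ℝ) {t : ℕ} {x : Fin (d + 1) → ℤ}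
    {r : ℕ × (Fin (d + 1) → ℤ)} (hr : r ∈ Sset d t x) :
    (Wminus P t x).mulVec ((Nmat P t x).mulVec
        (fun p => f (p.1.2 + Pi.single (Fin.last d) (p.1.1 : ℤ)))) ⟨r, hr⟩
      = ∑ q ∈ Sset d t x,
          P r.1 r.2 (q.2 - Pi.single (Fin.last d) (q.1 : ℤ)) * Hfun P f t x q := by
  rw [mulVec_apply]
  refine Eq.trans (Finset.sum_congr rfl fun q _ => ?_)
    (Finset.sum_coe_sort (Sset d t x)
      (fun q => P r.1 r.2 (q.2 - Pi.single (Fin.last d) (q.1 : ℤ)) * Hfun P f t x q))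
  simp only [Hfun_apply]
  rfl

lemma sum_plus_eq (f : (Fin (d + 1) → ℤ) → ℝ) {t : ℕ} {x : Fin (d + 1) → ℤ}
    {r : ℕ × (Fin (d + 1) → ℤ)} (hr : r ∈ Sset d t x) :
    (Wplus P t x).mulVec
        (fun p => f (p.1.2 + Pi.single (Fin.last d) (p.1.1 : ℤ))) ⟨r, hr⟩
      = ∑ q ∈ Sset d t x, P r.1 r.2 (q.2 + Pi.single (Fin.last d) (q.1 : ℤ)) *
          f (q.2 + Pi.single (Fin.last d) (q.1 : ℤ)) := by
  rw [mulVec_apply]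
  refine Eq.trans (Finset.sum_congr rfl fun q _ => ?_)
    (Finset.sum_coe_sort (Sset d t x)
      (fun q => P r.1 r.2 (q.2 + Pi.single (Fin.last d) (q.1 : ℤ)) *
        f (q.2 + Pi.single (Fin.last d) (q.1 : ℤ))))
  rfl

lemma big_row (hP : IsRandomWalk d P) (f : (Fin (d + 1) → ℤ) → ℝ) {t : ℕ}
    {x : Fin (d + 1) → ℤ} {r : ℕ × (Fin (d + 1) → ℤ)} (hr : r ∈ Sset d t x) :
    ∑ q ∈ Sset d t x, P r.1 r.2 (q.2 - Pi.single (Fin.last d) (q.1 : ℤ)) * Hfun P f t x q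
      = ∑ q ∈ Sset d t x, P r.1 r.2 (q.2 + Pi.single (Fin.last d) (q.1 : ℤ)) *
          f (q.2 + Pi.single (Fin.last d) (q.1 : ℤ)) := by
  rw [← sum_minus_eq f hr, ← sum_plus_eq f hr, Nmat_solves hP]

lemma small_row (hP : IsRandomWalk d P) (f : (Fin (d + 1) → ℤ) → ℝ) {t s : ℕ}
    {x y : Fin (d + 1) → ℤ} (hsy : (s, y) ∈ Sset d t x)
    {r : ℕ × (Fin (d + 1) → ℤ)} (hr : r ∈ Sset d s y) :
    ∑ q ∈ Sset d s y, P r.1 r.2 (q.2 - Pi.single (Fin.last d) (q.1 : ℤ)) * Hfun P f t x q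
      = ∑ q ∈ Sset d s y, P r.1 r.2 (q.2 + Pi.single (Fin.last d) (q.1 : ℤ)) *
          f (q.2 + Pi.single (Fin.last d) (q.1 : ℤ)) := by
  have hsub := Sset_subset hsy
  have hr' : r ∈ Sset d t x := hsub hr
  have hrm := mem_Sset_iff.1 hr
  have hminus : ∑ q ∈ Sset d s y,
      P r.1 r.2 (q.2 - Pi.single (Fin.last d) (q.1 : ℤ)) * Hfun P f t x q
      = ∑ q ∈ Sset d t x,
        P r.1 r.2 (q.2 - Pi.single (Fin.last d) (q.1 : ℤ)) * Hfun P f t x q := by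
    apply Finset.sum_subset hsub
    intro q hq hnq
    have hqm := mem_Sset_iff.1 hq
    have hzero : P r.1 r.2 (q.2 - Pi.single (Fin.last d) (q.1 : ℤ)) = 0 := by
      by_contra hne
      have hmem : (q.1, q.2) ∈ Sset d r.1 r.2 := by
        apply entry_mem_Sset hP hrm.2.2.1 hqm.2.2.1 hqm.1 (c := -(q.1 : ℤ)) (by simp)
        have he : q.2 + (Pi.single (Fin.last d) (-(q.1 : ℤ)) : Fin (d + 1) → ℤ) =
            q.2 - Pi.single (Fin.last d) (q.1 : ℤ) := by
          rw [Pi.single_neg, sub_eq_add_neg]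
        rw [he]
        exact hne
      exact hnq (Sset_subset hr hmem)
    rw [hzero, zero_mul]
  have hplus : ∑ q ∈ Sset d s y, P r.1 r.2 (q.2 + Pi.single (Fin.last d) (q.1 : ℤ)) *
        f (q.2 + Pi.single (Fin.last d) (q.1 : ℤ))
      = ∑ q ∈ Sset d t x, P r.1 r.2 (q.2 + Pi.single (Fin.last d) (q.1 : ℤ)) *
          f (q.2 + Pi.single (Fin.last d) (q.1 : ℤ)) := by
    apply Finset.sum_subset hsub
    intro q hq hnq
    have hqm := mem_Sset_iff.1 hq
    have hzero : P r.1 r.2 (q.2 + Pi.single (Fin.last d) (q.1 : ℤ)) = 0 := by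
      by_contra hne
      have hmem : (q.1, q.2) ∈ Sset d r.1 r.2 :=
        entry_mem_Sset hP hrm.2.2.1 hqm.2.2.1 hqm.1 (c := (q.1 : ℤ)) (by simp) hne
      exact hnq (Sset_subset hr hmem)
    rw [hzero, zero_mul]
  rw [hminus, hplus]
  exact big_row hP f hr'

lemma Hfun_consistent (hP : IsRandomWalk d P) (f : (Fin (d + 1) → ℤ) → ℝ)
    {t s : ℕ} {x y : Fin (d + 1) → ℤ} (hm : (s, y) ∈ Sset d t x) :
    Hfun P f t x (s, y) = Hfun P f s y (s, y) := by
  obtain ⟨hs1, -, hy, -, -⟩ := mem_Sset_iff.1 hm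
  have hself : (s, y) ∈ Sset d s y := self_mem_Sset hs1 hy
  have hsys : (Wminus P s y).mulVec (fun q => Hfun P f t x q.1)
      = (Wplus P s y).mulVec
          (fun p => f (p.1.2 + Pi.single (Fin.last d) (p.1.1 : ℤ))) := by
    funext rr
    have e1 : (Wminus P s y).mulVec (fun q => Hfun P f t x q.1) rr
        = ∑ q ∈ Sset d s y,
          P rr.1.1 rr.1.2 (q.2 - Pi.single (Fin.last d) (q.1 : ℤ)) * Hfun P f t x q := by
      rw [mulVec_apply]
      refine Eq.trans (Finset.sum_congr rfl fun q _ => ?_)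
        (Finset.sum_coe_sort (Sset d s y)
          (fun q => P rr.1.1 rr.1.2 (q.2 - Pi.single (Fin.last d) (q.1 : ℤ)) *
            Hfun P f t x q))
      rfl
    have e2 : (Wplus P s y).mulVec
          (fun p => f (p.1.2 + Pi.single (Fin.last d) (p.1.1 : ℤ))) rr
        = ∑ q ∈ Sset d s y, P rr.1.1 rr.1.2 (q.2 + Pi.single (Fin.last d) (q.1 : ℤ)) *
            f (q.2 + Pi.single (Fin.last d) (q.1 : ℤ)) := by
      rw [mulVec_apply]
      refine Eq.trans (Finset.sum_congr rfl fun q _ => ?_)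
        (Finset.sum_coe_sort (Sset d s y)
          (fun q => P rr.1.1 rr.1.2 (q.2 + Pi.single (Fin.last d) (q.1 : ℤ)) *
            f (q.2 + Pi.single (Fin.last d) (q.1 : ℤ))))
      rfl
    rw [e1, e2]
    exact small_row hP f hm rr.2
  have hfin := mulVec_cancel hP hsys
  have heval := congrFun hfin ⟨(s, y), hself⟩
  rw [← Hfun_apply f ⟨(s, y), hself⟩] at heval
  exact heval
end RW2

section Final

variable {d : ℕ} {P : ℕ → (Fin (d + 1) → ℤ) → (Fin (d + 1) → ℤ) → ℝ}

lemma update_add_single {z : Fin (d + 1) → ℤ} {c : ℤ} (hc : z (Fin.last d) = c) :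
    Function.update z (Fin.last d) 0 + Pi.single (Fin.last d) c = z := by
  funext i
  by_cases hi : i = Fin.last d
  · subst hi; simp [hc]
  · simp [Function.update_of_ne hi, Pi.single_eq_of_ne hi]

lemma update_sub_single {z : Fin (d + 1) → ℤ} {c : ℤ} (hc : z (Fin.last d) = -c) :
    Function.update z (Fin.last d) 0 - Pi.single (Fin.last d) c = z := by
  rw [sub_eq_add_neg, ← Pi.single_neg]
  exact update_add_single (by rw [hc])

lemma update_of_add {y : Fin (d + 1) → ℤ} (hy : y (Fin.last d) = 0) (c : ℤ) :
    Function.update (y + Pi.single (Fin.last d) c) (Fin.last d) 0 = y := by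
  funext i
  by_cases hi : i = Fin.last d
  · subst hi; simp [hy]
  · simp [Function.update_of_ne hi, Pi.single_eq_of_ne hi]

lemma update_of_sub {y : Fin (d + 1) → ℤ} (hy : y (Fin.last d) = 0) (c : ℤ) :
    Function.update (y - Pi.single (Fin.last d) c) (Fin.last d) 0 = y := by
  rw [sub_eq_add_neg, ← Pi.single_neg]
  exact update_of_add hy _

lemma norm1_decomp {x z : Fin (d + 1) → ℤ} (hx : x (Fin.last d) = 0) :
    norm1 (z - x) = norm1 (Function.update z (Fin.last d) 0 - x) + |z (Fin.last d)| := by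
  have h2 : (Function.update z (Fin.last d) 0 - x) (Fin.last d) = 0 := by simp [hx]
  have h1 : z - x = (Function.update z (Fin.last d) 0 - x) +
      Pi.single (Fin.last d) (z (Fin.last d)) := by
    funext i
    by_cases hi : i = Fin.last d
    · subst hi; simp [hx]
    · simp [Function.update_of_ne hi, Pi.single_eq_of_ne hi]
  rw [h1, norm1_add_single_last h2]

lemma mem_Sset_of_P_ne (hP : IsRandomWalk d P) {t : ℕ} {x z : Fin (d + 1) → ℤ}
    (hx : x (Fin.last d) = 0) (hz : z (Fin.last d) ≠ 0) (h : P t x z ≠ 0) :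
    ((z (Fin.last d)).natAbs, Function.update z (Fin.last d) 0) ∈ Sset d t x := by
  obtain ⟨h1, h2⟩ := P_support hP t x z h
  rw [norm1_decomp hx] at h1 h2
  have habs : |z (Fin.last d)| = ((z (Fin.last d)).natAbs : ℤ) := Int.abs_eq_natAbs _
  rw [habs] at h1 h2
  have hn := norm1_nonneg (Function.update z (Fin.last d) 0 - x)
  rw [mem_Sset_iff]
  refine ⟨Int.natAbs_pos.2 hz, ?_, by simp, by simp; linarith, ?_⟩
  · have hc : ((z (Fin.last d)).natAbs : ℤ) ≤ (t : ℤ) := by linarith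
    exact_mod_cast hc
  · have he : (t : ℤ) - ((z (Fin.last d)).natAbs : ℤ) -
        norm1 (Function.update z (Fin.last d) 0 - x) =
        (t : ℤ) - (norm1 (Function.update z (Fin.last d) 0 - x) +
          ((z (Fin.last d)).natAbs : ℤ)) := by ring
    simp only [he]
    exact h2

lemma mem_box_of_P_ne (hP : IsRandomWalk d P) {t : ℕ} {x z : Fin (d + 1) → ℤ}
    (h : P t x z ≠ 0) :
    z ∈ Fintype.piFinset (fun i => Finset.Icc (x i - (t : ℤ)) (x i + (t : ℤ))) := by
  have h1 := (P_support hP t x z h).1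
  rw [Fintype.mem_piFinset]
  intro i
  rw [Finset.mem_Icc]
  have hb := abs_le_norm1 (z - x) i
  simp only [Pi.sub_apply] at hb
  have hb2 : |z i - x i| ≤ (t : ℤ) := le_trans hb h1
  rw [abs_le] at hb2
  constructor <;> linarith [hb2.1, hb2.2]

lemma expect_eq_sum (hP : IsRandomWalk d P) (t : ℕ) (x : Fin (d + 1) → ℤ)
    (g : (Fin (d + 1) → ℤ) → ℝ) :
    expect P t x g = ∑ z ∈ Fintype.piFinset
      (fun i => Finset.Icc (x i - (t : ℤ)) (x i + (t : ℤ))), g z * P t x z := by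
  apply finsum_eq_sum_of_support_subset
  intro z hz
  rw [Function.mem_support] at hz
  have hp : P t x z ≠ 0 := fun h0 => hz (by rw [h0, mul_zero])
  exact mem_box_of_P_ne hP hp

lemma Ntrans_eq_Hfun' (f : (Fin (d + 1) → ℤ) → ℝ) (w : Fin (d + 1) → ℤ) :
    Ntrans P f w = Hfun P f (-(w (Fin.last d))).toNat (Function.update w (Fin.last d) 0)
      ((-(w (Fin.last d))).toNat, Function.update w (Fin.last d) 0) := rfl

lemma Ntrans_zero (f : (Fin (d + 1) → ℤ) → ℝ) (w : Fin (d + 1) → ℤ)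
    (h : 0 ≤ w (Fin.last d)) : Ntrans P f w = 0 := by
  rw [Ntrans_eq_Hfun']
  show dite _ _ _ = _
  rw [dif_neg]
  intro hm
  have h1 := (mem_Sset_iff.1 hm).1
  omega

lemma Ntrans_Hfun (hP : IsRandomWalk d P) (f : (Fin (d + 1) → ℤ) → ℝ) {t s : ℕ}
    {x y : Fin (d + 1) → ℤ} (hm : (s, y) ∈ Sset d t x) :
    Ntrans P f (y - Pi.single (Fin.last d) (s : ℤ)) = Hfun P f t x (s, y) := by
  obtain ⟨hs1, -, hy0, -, -⟩ := mem_Sset_iff.1 hm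
  have hy : y (Fin.last d) = 0 := hy0
  have hw : (y - (Pi.single (Fin.last d) (s : ℤ) : Fin (d + 1) → ℤ)) (Fin.last d)
      = -(s : ℤ) := by simp [hy]
  rw [Ntrans_eq_Hfun', hw, show (-(-(s : ℤ))).toNat = s by omega,
    update_of_sub hy]
  exact (Hfun_consistent hP f hm).symm

lemma sum_box_plus (hP : IsRandomWalk d P) {t : ℕ} {x : Fin (d + 1) → ℤ}
    (hx : x (Fin.last d) = 0) (F : (Fin (d + 1) → ℤ) → ℝ)
    (hF : ∀ z, z (Fin.last d) ≤ 0 → F z = 0) :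
    ∑ z ∈ Fintype.piFinset (fun i => Finset.Icc (x i - (t : ℤ)) (x i + (t : ℤ))),
        F z * P t x z
      = ∑ q ∈ Sset d t x, F (q.2 + Pi.single (Fin.last d) (q.1 : ℤ)) *
          P t x (q.2 + Pi.single (Fin.last d) (q.1 : ℤ)) := by
  refine Finset.sum_bij_ne_zero
    (fun z _ _ => ((z (Fin.last d)).natAbs, Function.update z (Fin.last d) 0))
    ?_ ?_ ?_ ?_
  · intro z hz hnz
    obtain ⟨hf0, hp0⟩ := mul_ne_zero_iff.1 hnz
    have hzl : ¬ z (Fin.last d) ≤ 0 := fun hle => hf0 (hF z hle)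
    exact mem_Sset_of_P_ne hP hx (by omega) hp0
  · intro z₁ h₁₁ h₁₂ z₂ h₂₁ h₂₂ heq
    obtain ⟨hfa, -⟩ := mul_ne_zero_iff.1 h₁₂
    obtain ⟨hfb, -⟩ := mul_ne_zero_iff.1 h₂₂
    have ha : ¬ z₁ (Fin.last d) ≤ 0 := fun hle => hfa (hF _ hle)
    have hb : ¬ z₂ (Fin.last d) ≤ 0 := fun hle => hfb (hF _ hle)
    rw [Prod.mk.injEq] at heq
    obtain ⟨hn, hu⟩ := heq
    have hlast : z₁ (Fin.last d) = z₂ (Fin.last d) := by omega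
    funext i
    by_cases hi : i = Fin.last d
    · subst hi; exact hlast
    · have hcf := congrFun hu i
      rwa [Function.update_of_ne hi, Function.update_of_ne hi] at hcf
  · intro q hq hnz
    have hql : q.2 (Fin.last d) = 0 := (mem_Sset_iff.1 hq).2.2.1
    obtain ⟨-, hp0⟩ := mul_ne_zero_iff.1 hnz
    refine ⟨q.2 + Pi.single (Fin.last d) (q.1 : ℤ), mem_box_of_P_ne hP hp0, hnz, ?_⟩
    have hlast : (q.2 + (Pi.single (Fin.last d) (q.1 : ℤ) : Fin (d + 1) → ℤ))
        (Fin.last d) = (q.1 : ℤ) := by simp [hql]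
    refine Prod.ext ?_ ?_
    · show ((q.2 + (Pi.single (Fin.last d) (q.1 : ℤ) : Fin (d + 1) → ℤ))
          (Fin.last d)).natAbs = q.1
      rw [hlast]
      simp
    · exact update_of_add hql _
  · intro z h₁ h₂
    obtain ⟨hf0, -⟩ := mul_ne_zero_iff.1 h₂
    have hzl : ¬ z (Fin.last d) ≤ 0 := fun hle => hf0 (hF _ hle)
    have hz2 : Function.update z (Fin.last d) 0 +
        Pi.single (Fin.last d) (((z (Fin.last d)).natAbs : ℤ)) = z := by
      rw [show ((z (Fin.last d)).natAbs : ℤ) = z (Fin.last d) by omega]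
      exact update_add_single rfl
    rw [hz2]

lemma sum_box_minus (hP : IsRandomWalk d P) {t : ℕ} {x : Fin (d + 1) → ℤ}
    (hx : x (Fin.last d) = 0) (F : (Fin (d + 1) → ℤ) → ℝ)
    (hF : ∀ z, 0 ≤ z (Fin.last d) → F z = 0) :
    ∑ z ∈ Fintype.piFinset (fun i => Finset.Icc (x i - (t : ℤ)) (x i + (t : ℤ))),
        F z * P t x z
      = ∑ q ∈ Sset d t x, F (q.2 - Pi.single (Fin.last d) (q.1 : ℤ)) *
          P t x (q.2 - Pi.single (Fin.last d) (q.1 : ℤ)) := by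
  refine Finset.sum_bij_ne_zero
    (fun z _ _ => ((z (Fin.last d)).natAbs, Function.update z (Fin.last d) 0))
    ?_ ?_ ?_ ?_
  · intro z hz hnz
    obtain ⟨hf0, hp0⟩ := mul_ne_zero_iff.1 hnz
    have hzl : ¬ 0 ≤ z (Fin.last d) := fun hle => hf0 (hF z hle)
    exact mem_Sset_of_P_ne hP hx (by omega) hp0
  · intro z₁ h₁₁ h₁₂ z₂ h₂₁ h₂₂ heq
    obtain ⟨hfa, -⟩ := mul_ne_zero_iff.1 h₁₂
    obtain ⟨hfb, -⟩ := mul_ne_zero_iff.1 h₂₂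
    have ha : ¬ 0 ≤ z₁ (Fin.last d) := fun hle => hfa (hF _ hle)
    have hb : ¬ 0 ≤ z₂ (Fin.last d) := fun hle => hfb (hF _ hle)
    rw [Prod.mk.injEq] at heq
    obtain ⟨hn, hu⟩ := heq
    have hlast : z₁ (Fin.last d) = z₂ (Fin.last d) := by omega
    funext i
    by_cases hi : i = Fin.last d
    · subst hi; exact hlast
    · have hcf := congrFun hu i
      rwa [Function.update_of_ne hi, Function.update_of_ne hi] at hcf
  · intro q hq hnz
    have hql : q.2 (Fin.last d) = 0 := (mem_Sset_iff.1 hq).2.2.1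
    obtain ⟨-, hp0⟩ := mul_ne_zero_iff.1 hnz
    refine ⟨q.2 - Pi.single (Fin.last d) (q.1 : ℤ), mem_box_of_P_ne hP hp0, hnz, ?_⟩
    have hlast : (q.2 - (Pi.single (Fin.last d) (q.1 : ℤ) : Fin (d + 1) → ℤ))
        (Fin.last d) = -(q.1 : ℤ) := by simp [hql]
    refine Prod.ext ?_ ?_
    · show ((q.2 - (Pi.single (Fin.last d) (q.1 : ℤ) : Fin (d + 1) → ℤ))
          (Fin.last d)).natAbs = q.1
      rw [hlast]
      simp
    · exact update_of_sub hql _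
  · intro z h₁ h₂
    obtain ⟨hf0, -⟩ := mul_ne_zero_iff.1 h₂
    have hzl : ¬ 0 ≤ z (Fin.last d) := fun hle => hf0 (hF _ hle)
    have hz2 : Function.update z (Fin.last d) 0 -
        Pi.single (Fin.last d) (((z (Fin.last d)).natAbs : ℤ)) = z :=
      update_sub_single (by omega)
    rw [hz2]

end Final

/-- Main theorem: for `(t,x) ∈ ℕ × ∂B` with `t ≥ 1` and `f` vanishing
outside `B`, `E[f(Z^x_t)] = E[N f(Z^x_t)]`. -/
theorem stmt_11 (d : ℕ) (P : ℕ → (Fin (d + 1) → ℤ) → (Fin (d + 1) → ℤ) → ℝ)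
    (hP : IsRandomWalk d P) (t : ℕ) (ht : 1 ≤ t)
    (x : Fin (d + 1) → ℤ) (hx : x (Fin.last d) = 0)
    (f : (Fin (d + 1) → ℤ) → ℝ) (hf : ∀ z, z (Fin.last d) ≤ 0 → f z = 0) :
    expect P t x f = expect P t x (Ntrans P f) := by
  classical
  have hS : (t, x) ∈ Sset d t x := self_mem_Sset ht hx
  have e1 : expect P t x f = ∑ q ∈ Sset d t x,
      f (q.2 + Pi.single (Fin.last d) (q.1 : ℤ)) *
        P t x (q.2 + Pi.single (Fin.last d) (q.1 : ℤ)) := by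
    rw [expect_eq_sum hP]
    exact sum_box_plus hP hx f hf
  have e2 : expect P t x (Ntrans P f) = ∑ q ∈ Sset d t x,
      Ntrans P f (q.2 - Pi.single (Fin.last d) (q.1 : ℤ)) *
        P t x (q.2 - Pi.single (Fin.last d) (q.1 : ℤ)) := by
    rw [expect_eq_sum hP]
    exact sum_box_minus hP hx (Ntrans P f) (fun w h => Ntrans_zero f w h)
  have e3 : ∑ q ∈ Sset d t x,
      Ntrans P f (q.2 - Pi.single (Fin.last d) (q.1 : ℤ)) *
        P t x (q.2 - Pi.single (Fin.last d) (q.1 : ℤ))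
      = ∑ q ∈ Sset d t x,
        P t x (q.2 - Pi.single (Fin.last d) (q.1 : ℤ)) * Hfun P f t x q := by
    refine Finset.sum_congr rfl fun q hq => ?_
    rw [mul_comm]
    have hh : Ntrans P f (q.2 - Pi.single (Fin.last d) (q.1 : ℤ))
        = Hfun P f t x (q.1, q.2) := Ntrans_Hfun hP f hq
    rw [hh]
  have e4 := big_row hP f (r := (t, x)) hS
  have e5 : ∑ q ∈ Sset d t x,
      f (q.2 + Pi.single (Fin.last d) (q.1 : ℤ)) *
        P t x (q.2 + Pi.single (Fin.last d) (q.1 : ℤ))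
      = ∑ q ∈ Sset d t x,
        P t x (q.2 + Pi.single (Fin.last d) (q.1 : ℤ)) *
          f (q.2 + Pi.single (Fin.last d) (q.1 : ℤ)) :=
    Finset.sum_congr rfl fun q _ => mul_comm _ _
  rw [e1, e2, e3, e5]
  exact e4.symm
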